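/- Let Λ, η, κ > 0, Ψ ≥ 0, and let e_q, e_ω ∈ ℝ³ satisfy ‖e_q‖² ≤ Ψ ≤ 2‖e_q‖². Define the sliding variable s = (Λ+Ψ)e_q + η e_ω, the Lyapunov function V = (1/2)sᵀs + κΨ, and the vector z_q = (‖e_q‖, ‖e_ω‖) ∈ ℝ². Then z_qᵀ W₁ z_q ≤ V ≤ z_qᵀ W₂ z_q, where W₁ = [[(Λ+Ψ)²/2 + κ, −(Λ+Ψ)η/2], [−(Λ+Ψ)η/2, η²/2]] and W₂ = [[(Λ+Ψ)²/2 + 2κ, (Λ+Ψ)η/2], [(Λ+Ψ)η/2, η²/2]]. -/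

import Mathlib

open Matrix

/-! Write `c = Λ + Ψ ≥ 0`. Both quadratic forms are of the shape
`½ (c‖e_q‖ ∓ η‖e_ω‖)² + kκ‖e_q‖²` with `k = 1, 2`, so the sandwich splits into the
triangle inequalities `(c‖e_q‖ - η‖e_ω‖)² ≤ ‖s‖² ≤ (c‖e_q‖ + η‖e_ω‖)²` and
`κ‖e_q‖² ≤ κΨ ≤ 2κ‖e_q‖²`. -/

theorem dotProduct_mulVec_fin_two {R : Type*} [CommRing R] (a b c d x y : R) :
    ![x, y] ⬝ᵥ !![a, b; c, d] *ᵥ ![x, y] = a * x ^ 2 + (b + c) * x * y + d * y ^ 2 := by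
  simp only [mulVec, dotProduct, Fin.sum_univ_two, of_apply, cons_val_zero,
    cons_val_one, cons_val_fin_one]
  ring

section Normed

variable {E : Type*} [SeminormedAddCommGroup E]

theorem sq_norm_add_mem_Icc (u v : E) :
    ‖u + v‖ ^ 2 ∈ Set.Icc ((‖u‖ - ‖v‖) ^ 2) ((‖u‖ + ‖v‖) ^ 2) := by
  have hlow : |‖u‖ - ‖v‖| ≤ ‖u + v‖ := by
    simpa [sub_neg_eq_add] using abs_norm_sub_norm_le u (-v)
  refine ⟨sq_le_sq' (abs_le.mp hlow).1 (abs_le.mp hlow).2, ?_⟩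
  exact pow_le_pow_left₀ (norm_nonneg _) (norm_add_le u v) 2

theorem sq_norm_smul_add_smul_mem_Icc [NormedSpace ℝ E] {a b : ℝ} (ha : 0 ≤ a) (hb : 0 ≤ b)
    (x y : E) :
    ‖a • x + b • y‖ ^ 2 ∈ Set.Icc ((a * ‖x‖ - b * ‖y‖) ^ 2) ((a * ‖x‖ + b * ‖y‖) ^ 2) := by
  simpa only [norm_smul, Real.norm_of_nonneg ha, Real.norm_of_nonneg hb]
    using sq_norm_add_mem_Icc (a • x) (b • y)

end Normed

/-- Sandwich bounds for the Lyapunov candidate: with `s = (Λ+Ψ)e_q + η e_ω`,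
`V = ½ sᵀs + κΨ` and `z_q = (‖e_q‖, ‖e_ω‖)`, one has
`z_qᵀ W₁ z_q ≤ V ≤ z_qᵀ W₂ z_q`. -/
theorem lyapunov_sandwich (Λ η κ Ψ : ℝ) (hΛ : 0 < Λ) (hη : 0 < η) (hκ : 0 < κ)
    (hΨ : 0 ≤ Ψ) (eq eω : EuclideanSpace ℝ (Fin 3))
    (hΨl : ‖eq‖ ^ 2 ≤ Ψ) (hΨu : Ψ ≤ 2 * ‖eq‖ ^ 2)
    (s : EuclideanSpace ℝ (Fin 3)) (hs : s = (Λ + Ψ) • eq + η • eω)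
    (V : ℝ) (hV : V = (1 / 2) * ‖s‖ ^ 2 + κ * Ψ)
    (zq : Fin 2 → ℝ) (hzq : zq = ![‖eq‖, ‖eω‖])
    (W₁ W₂ : Matrix (Fin 2) (Fin 2) ℝ)
    (hW₁ : W₁ = !![(Λ + Ψ) ^ 2 / 2 + κ, -(Λ + Ψ) * η / 2;
                   -(Λ + Ψ) * η / 2, η ^ 2 / 2])
    (hW₂ : W₂ = !![(Λ + Ψ) ^ 2 / 2 + 2 * κ, (Λ + Ψ) * η / 2;
                   (Λ + Ψ) * η / 2, η ^ 2 / 2]) :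
    zq ⬝ᵥ W₁.mulVec zq ≤ V ∧ V ≤ zq ⬝ᵥ W₂.mulVec zq := by
  subst hs hV hzq hW₁ hW₂
  obtain ⟨hs_low, hs_upp⟩ :=
    sq_norm_smul_add_smul_mem_Icc (by positivity : 0 ≤ Λ + Ψ) hη.le eq eω
  have hκ_low : κ * ‖eq‖ ^ 2 ≤ κ * Ψ := mul_le_mul_of_nonneg_left hΨl hκ.le
  have hκ_upp : κ * Ψ ≤ κ * (2 * ‖eq‖ ^ 2) := mul_le_mul_of_nonneg_left hΨu hκ.le
  rw [dotProduct_mulVec_fin_two, dotProduct_mulVec_fin_two]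
  constructor
  · linear_combination (1 / 2) * hs_low + hκ_low
  · linear_combination (1 / 2) * hs_upp + hκ_upp
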